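/- arXiv:1501.05716 — 2 statements merged into one kernel-verified Lean document; each statement's English description precedes it below -/
import Mathlib

section
/- Let f : [0,∞) → ℝ be C¹ with f(0)=f(1)=0, (1-u)f(u)>0 for u>0, u≠1, f'(0)>0, f'(1)<0, and f(u) ≤ f'(0)u for u ≥ 0. Set c₀ = 2√(f'(0)). Then for every c ≥ c₀ the problem q'' - c q' + f(q) = 0 on ℝ with q(-∞)=0, q(+∞)=1, q(0)=1/2 and q' > 0 on ℝ has a solution, and for every c < c₀ it has no solution. -/
/-!
Nonexistence for `c < c₀`. If `c ≤ 0` the wave is strictly concave, so it decreases at least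
linearly towards `-∞`, which contradicts `q(-∞) = 0`. If `0 < c < 2√(f'(0))`, then near `-∞` the
function `w = q e^{-cz/2}` is positive and satisfies `w'' ≤ -ε w` for some `ε > 0`, which is
impossible on a half-line.

Existence for `c ≥ c₀`. Writing `q' = p(q)` turns the wave equation into `p' = c - f(u) / p` on
`(0, 1)`. With `μ` the smaller root of `μ² - cμ + f'(0) = 0`, the region
`β u(1-u) ≤ p ≤ min(μu, K(1-u))` is invariant under the backward flow for `β` small and `K` large.
The solutions started on its lower boundary at `1 - ε` increase as `ε ↓ 0`, and their monotone
limit solves the equation on all of `(0, 1)`. Since `p ≤ μu` and `p ≤ K(1-u)`, the map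
`u ↦ ∫_{1/2}^u ds / p(s)` is an increasing bijection from `(0, 1)` onto `ℝ`; its inverse is the
wave.
-/

open Filter Set Real

noncomputable section

/-- Fisher-KPP (monostable) conditions (F) on the nonlinearity `f`. -/
def KPP (f : ℝ → ℝ) : Prop :=
  ContDiff ℝ 1 f ∧ f 0 = 0 ∧ f 1 = 0 ∧
  (∀ u : ℝ, 0 < u → u ≠ 1 → (1 - u) * f u > 0) ∧
  0 < deriv f 0 ∧ deriv f 1 < 0 ∧ ∀ u : ℝ, 0 ≤ u → f u ≤ deriv f 0 * u

/-- The minimal speed `c₀ = 2√(f'(0))` of KPP traveling waves. -/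
def c0 (f : ℝ → ℝ) : ℝ := 2 * Real.sqrt (deriv f 0)

/-- A KPP traveling wave of speed `c`: `q'' - c q' + f(q) = 0` on `ℝ`,
`q(-∞)=0`, `q(+∞)=1`, `q(0)=1/2`, `q' > 0`. -/
def IsKPPWave (f : ℝ → ℝ) (c : ℝ) (q : ℝ → ℝ) : Prop :=
  ContDiff ℝ 2 q ∧
  (∀ z : ℝ, deriv (deriv q) z - c * deriv q z + f (q z) = 0) ∧
  Filter.Tendsto q Filter.atBot (nhds 0) ∧ Filter.Tendsto q Filter.atTop (nhds 1) ∧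
  q 0 = 1 / 2 ∧ ∀ z : ℝ, 0 < deriv q z

open Topology

theorem le_on_Icc_of_deriv_le_of_lt {v u : ℝ} {P₁ P₂ d₁ d₂ : ℝ → ℝ}
    (h₁ : ContinuousOn P₁ (Icc v u)) (h₂ : ContinuousOn P₂ (Icc v u))
    (hd₁ : ∀ t ∈ Ioo v u, HasDerivAt P₁ (d₁ t) t) (hd₂ : ∀ t ∈ Ioo v u, HasDerivAt P₂ (d₂ t) t)
    (hd : ∀ t ∈ Ioo v u, P₂ t < P₁ t → d₂ t ≤ d₁ t) (hu : P₁ u ≤ P₂ u) :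
    ∀ t ∈ Icc v u, P₁ t ≤ P₂ t := by
  intro x hx
  by_contra! hlt
  -- `y` is the first point after `x` with `P₁ y ≤ P₂ y`; on `[x, y)` the difference `P₂ - P₁` is
  -- negative, hence nonincreasing, so it cannot come back up to `0` at `y`
  set S := Icc x u ∩ {t | P₁ t ≤ P₂ t}
  have hS : IsClosed S := by
    have : S = Icc x u ∩ (fun t => P₂ t - P₁ t) ⁻¹' Ici 0 := by
      ext t; simp [S, sub_nonneg]
    rw [this]
    exact ((h₂.sub h₁).mono (Icc_subset_Icc_left hx.1)).preimage_isClosed_of_isClosed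
      isClosed_Icc isClosed_Ici
  have huS : u ∈ S := ⟨⟨hx.2, le_rfl⟩, hu⟩
  have hbdd : BddBelow S := ⟨x, fun t ht => ht.1.1⟩
  set y := sInf S
  have hyS : y ∈ S := hS.csInf_mem ⟨u, huS⟩ hbdd
  have hxy : x < y := lt_of_le_of_ne hyS.1.1 fun h => (not_le.2 hlt) (h ▸ hyS.2)
  have hbelow : ∀ t ∈ Ico x y, P₂ t < P₁ t := fun t ht => by
    by_contra! hle
    exact (not_le.2 ht.2) (csInf_le hbdd ⟨⟨ht.1, ht.2.le.trans hyS.1.2⟩, hle⟩)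
  have hsub : Icc x y ⊆ Icc v u := Icc_subset_Icc hx.1 hyS.1.2
  have hanti : AntitoneOn (fun t => P₂ t - P₁ t) (Icc x y) := by
    refine antitoneOn_of_deriv_nonpos (convex_Icc x y) ((h₂.sub h₁).mono hsub) ?_ ?_
    · intro t ht
      rw [interior_Icc] at ht
      have ht' : t ∈ Ioo v u := ⟨hx.1.trans_lt ht.1, ht.2.trans_le hyS.1.2⟩
      exact ((hd₂ t ht').fun_sub (hd₁ t ht')).differentiableAt.differentiableWithinAt
    · intro t ht
      rw [interior_Icc] at ht
      have ht' : t ∈ Ioo v u := ⟨hx.1.trans_lt ht.1, ht.2.trans_le hyS.1.2⟩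
      rw [((hd₂ t ht').fun_sub (hd₁ t ht')).deriv, sub_nonpos]
      exact hd t ht' (hbelow t ⟨ht.1.le, ht.2⟩)
  have := hanti ⟨le_rfl, hxy.le⟩ ⟨hxy.le, le_rfl⟩ hxy.le
  have hy : P₁ y ≤ P₂ y := hyS.2
  simp only at this
  linarith

theorem tendsto_atBot_of_hasDerivAt_ge {g g' : ℝ → ℝ} {a δ : ℝ} (hδ : 0 < δ)
    (hg : ∀ x ≤ a, HasDerivAt g (g' x) x) (hg' : ∀ x ≤ a, δ ≤ g' x) :
    Tendsto g atBot atBot := by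
  have hmono : MonotoneOn (fun x => g x - δ * x) (Iic a) := by
    refine monotoneOn_of_hasDerivWithinAt_nonneg (convex_Iic a) (f' := fun x => g' x - δ)
      (fun x hx =>
        ((hg x hx).fun_sub ((hasDerivAt_id' x).const_mul δ)).continuousAt.continuousWithinAt)
      (fun x hx => ?_) (fun x hx => ?_)
    · rw [interior_Iic] at hx
      simpa using ((hg x hx.le).fun_sub ((hasDerivAt_id' x).const_mul δ)).hasDerivWithinAt
    · rw [interior_Iic] at hx
      exact sub_nonneg.2 (hg' x hx.le)
  have hlin : Tendsto (fun x => g a - δ * a + δ * x) atBot atBot :=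
    tendsto_atBot_add_const_left _ _ (tendsto_id.const_mul_atBot hδ)
  refine tendsto_atBot_mono' atBot ?_ hlin
  filter_upwards [eventually_le_atBot a] with x hx
  have := hmono hx (mem_Iic.2 le_rfl) hx
  simp only at this
  linarith

theorem not_forall_pos_of_hasDerivAt_le_neg_mul {w W W' : ℝ → ℝ} {a ε : ℝ} (hε : 0 < ε)
    (hw : ∀ x ≤ a, HasDerivAt w (W x) x) (hW : ∀ x ≤ a, HasDerivAt W (W' x) x)
    (hle : ∀ x ≤ a, W' x ≤ -ε * w x) : ¬ ∀ x ≤ a, 0 < w x := by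
  intro hpos
  have hanti : ∀ g g' : ℝ → ℝ, (∀ x ≤ a, HasDerivAt g (g' x) x) → (∀ x ≤ a, g' x ≤ 0) →
      AntitoneOn g (Iic a) := fun g g' hg hg' =>
    antitoneOn_of_hasDerivWithinAt_nonpos (convex_Iic a)
      (fun x hx => (hg x hx).continuousAt.continuousWithinAt)
      (fun x hx => (hg x (mem_Iic.1 (interior_subset hx))).hasDerivWithinAt)
      fun x hx => hg' x (mem_Iic.1 (interior_subset hx))
  have hWanti : AntitoneOn W (Iic a) :=
    hanti W W' hW fun x hx => (hle x hx).trans (by nlinarith [hpos x hx])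
  -- if `w' = W` were positive somewhere, `w` would decrease linearly towards `-∞`
  have hWnonpos : ∀ x ≤ a, W x ≤ 0 := by
    intro z hz
    by_contra! hWz
    have hlim := tendsto_atBot_of_hasDerivAt_ge hWz (fun x hx => hw x (hx.trans hz))
      fun x hx => hWanti (mem_Iic.2 (hx.trans hz)) (mem_Iic.2 hz) hx
    obtain ⟨x, hx, hxz⟩ := ((hlim.eventually (eventually_lt_atBot 0)).and
      (eventually_le_atBot z)).exists
    exact (hpos x (hxz.trans hz)).not_gt hx
  have hwanti : AntitoneOn w (Iic a) := hanti w W hw hWnonpos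
  -- hence `w ≥ w a` on `(-∞, a]`, so `W' ≤ -ε w a` and `W → +∞` at `-∞`
  have hlim := tendsto_atBot_of_hasDerivAt_ge (g := fun x => -W x) (g' := fun x => -W' x)
    (mul_pos hε (hpos a le_rfl)) (fun x hx => (hW x hx).neg) fun x hx => by
      nlinarith [hle x hx, hwanti (mem_Iic.2 hx) (mem_Iic.2 le_rfl) hx]
  obtain ⟨x, hx, hxa⟩ := ((hlim.eventually (eventually_lt_atBot 0)).and
    (eventually_le_atBot a)).exists
  linarith [hWnonpos x hxa]

theorem exists_hasDerivWithinAt_Icc_of_lipschitzWith {E : Type*} [NormedAddCommGroup E]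
    [NormedSpace ℝ E] [CompleteSpace E] {V : ℝ → E → E} {v u : ℝ} {C K : NNReal} (hvu : v ≤ u)
    (x₀ : E) (hlip : ∀ t ∈ Icc v u, LipschitzWith K (V t))
    (hcont : ∀ x, ContinuousOn (V · x) (Icc v u)) (hbound : ∀ t ∈ Icc v u, ∀ x, ‖V t x‖ ≤ C) :
    ∃ P : ℝ → E, P u = x₀ ∧ ∀ t ∈ Icc v u, HasDerivWithinAt P (V t (P t)) (Icc v u) t := by
  have hpl : IsPicardLindelof V (⟨u, hvu, le_rfl⟩ : Icc v u) x₀ (C * (u - v).toNNReal) 0 C K :=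
    { lipschitzOnWith := fun t ht => (hlip t ht).lipschitzOnWith
      continuousOn := fun x _ => hcont x
      norm_le := fun t ht x _ => hbound t ht x
      mul_max_le := by simp [sub_nonneg.2 hvu] }
  exact hpl.exists_eq_forall_mem_Icc_hasDerivWithinAt₀

theorem exists_abs_sub_div_le {g : ℝ → ℝ} (hg : Continuous g) (c : ℝ) {L : ℝ} (hL : 0 < L)
    (w y : ℝ) :
    ∃ D, ∀ t ∈ Icc w y, ∀ q, L ≤ q → |c - g t / q| ≤ D := by
  obtain ⟨M, hM⟩ := isCompact_Icc.exists_bound_of_continuousOn (s := Icc w y) hg.continuousOn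
  refine ⟨|c| + M / L, fun t ht q hq => ?_⟩
  have hq0 : 0 < q := hL.trans_le hq
  calc |c - g t / q| ≤ |c| + |g t| / q := by
        rw [← abs_of_pos hq0, ← abs_div, abs_of_pos hq0]
        exact abs_sub _ _
    _ ≤ |c| + M / L := by
        have hMt : |g t| ≤ M := hM t ht
        gcongr
        exact (abs_nonneg _).trans hMt

theorem exists_hasDerivWithinAt_sub_div_max {f : ℝ → ℝ} (hf : Continuous f) (c : ℝ) {m v u : ℝ}
    (hm : 0 < m) (hvu : v ≤ u) (x₀ : ℝ) :
    ∃ P : ℝ → ℝ, P u = x₀ ∧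
      ∀ t ∈ Icc v u, HasDerivWithinAt P (c - f t / max (P t) m) (Icc v u) t := by
  obtain ⟨M, hM⟩ := isCompact_Icc.exists_bound_of_continuousOn (s := Icc v u) hf.continuousOn
  have hmax : ∀ x, 0 < max x m := fun x => hm.trans_le (le_max_right x m)
  have hM0 : 0 ≤ M := (norm_nonneg _).trans (hM v (left_mem_Icc.2 hvu))
  obtain ⟨D, hD⟩ := exists_abs_sub_div_le hf c hm v u
  refine exists_hasDerivWithinAt_Icc_of_lipschitzWith (V := fun t x => c - f t / max x m)
    (C := D.toNNReal) (K := (M / m ^ 2).toNNReal) hvu x₀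
    (fun t ht => LipschitzWith.of_dist_le_mul fun x y => ?_) (fun x => by fun_prop)
    fun t ht x => (hD t ht _ (le_max_right x m)).trans (Real.le_coe_toNNReal D)
  have hft : |f t| ≤ M := hM t ht
  have hdiff : f t / max y m - f t / max x m
      = f t * (max x m - max y m) / (max x m * max y m) := by
    field_simp [(hmax x).ne', (hmax y).ne']
  have hden : m ^ 2 ≤ max x m * max y m := by
    nlinarith [le_max_right x m, le_max_right y m]
  rw [Real.dist_eq, Real.dist_eq, sub_sub_sub_cancel_left, hdiff, abs_div, abs_mul,
    abs_of_pos (mul_pos (hmax x) (hmax y)), Real.coe_toNNReal _ (by positivity)]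
  calc |f t| * |max x m - max y m| / (max x m * max y m)
      ≤ M * |x - y| / m ^ 2 := div_le_div₀ (by positivity)
        (mul_le_mul hft (abs_max_sub_max_le_abs x y m) (abs_nonneg _) hM0) (by positivity) hden
    _ = M / m ^ 2 * |x - y| := by ring

theorem le_on_Icc_of_hasDerivAt_sub_div {f P₁ P₂ : ℝ → ℝ} {c v u : ℝ}
    (hf : ∀ t ∈ Ioo v u, 0 ≤ f t) (h₁ : ContinuousOn P₁ (Icc v u)) (h₂ : ContinuousOn P₂ (Icc v u))
    (hd₁ : ∀ t ∈ Ioo v u, HasDerivAt P₁ (c - f t / P₁ t) t)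
    (hd₂ : ∀ t ∈ Ioo v u, HasDerivAt P₂ (c - f t / P₂ t) t) (hpos : ∀ t ∈ Ioo v u, 0 < P₂ t)
    (hu : P₁ u ≤ P₂ u) : ∀ t ∈ Icc v u, P₁ t ≤ P₂ t :=
  le_on_Icc_of_deriv_le_of_lt h₁ h₂ hd₁ hd₂ (fun t ht hlt =>
    sub_le_sub_left (div_le_div_of_nonneg_left (hf t ht) (hpos t ht) hlt.le) c) hu

section LimitOfSolutions

variable {g p : ℝ → ℝ} {Q : ℕ → ℝ → ℝ} {c L w y : ℝ}

theorem sub_eq_integral_sub_div_of_tendsto (hg : Continuous g) (hL : 0 < L) (hwy : w ≤ y)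
    (hQd : ∀ᶠ k in atTop, ∀ t ∈ Icc w y, HasDerivAt (Q k) (c - g t / Q k t) t)
    (hQL : ∀ᶠ k in atTop, ∀ t ∈ Icc w y, L ≤ Q k t)
    (hlim : ∀ t ∈ Icc w y, Tendsto (Q · t) atTop (𝓝 (p t))) :
    p y - p w = ∫ s in w..y, (c - g s / p s) := by
  obtain ⟨D, hD⟩ := exists_abs_sub_div_le hg c hL w y
  have hIoc : uIoc w y ⊆ Icc w y := by rw [uIoc_of_le hwy]; exact Ioc_subset_Icc_self
  have hcont : ∀ᶠ k in atTop, ContinuousOn (fun s => c - g s / Q k s) (Icc w y) := by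
    filter_upwards [hQd, hQL] with k hk hkL
    exact continuousOn_const.sub (hg.continuousOn.div
      (fun t ht => (hk t ht).continuousAt.continuousWithinAt)
      fun t ht => (hL.trans_le (hkL t ht)).ne')
  have hFTC : ∀ᶠ k in atTop, ∫ s in w..y, (c - g s / Q k s) = Q k y - Q k w := by
    filter_upwards [hQd, hcont] with k hk hkc
    refine intervalIntegral.integral_eq_sub_of_hasDerivAt (fun t ht => hk t ?_) ?_
    · rwa [uIcc_of_le hwy] at ht
    · exact (hkc.mono (by rw [uIcc_of_le hwy])).intervalIntegrable
  have hDCT : Tendsto (fun k => ∫ s in w..y, (c - g s / Q k s)) atTop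
      (𝓝 (∫ s in w..y, (c - g s / p s))) := by
    refine intervalIntegral.tendsto_integral_filter_of_dominated_convergence (fun _ => D) ?_ ?_
      intervalIntegrable_const (MeasureTheory.ae_of_all _ fun s hs => ?_)
    · filter_upwards [hcont] with k hk
      exact (hk.mono hIoc).aestronglyMeasurable measurableSet_uIoc
    · filter_upwards [hQL] with k hk
      exact MeasureTheory.ae_of_all _ fun s hs => hD s (hIoc hs) _ (hk s (hIoc hs))
    · have hps : L ≤ p s := ge_of_tendsto (hlim s (hIoc hs))
        (hQL.mono fun k hk => hk s (hIoc hs))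
      exact tendsto_const_nhds.sub (tendsto_const_nhds.div (hlim s (hIoc hs))
        (hL.trans_le hps).ne')
  refine tendsto_nhds_unique ?_ hDCT
  refine ((hlim y (right_mem_Icc.2 hwy)).sub (hlim w (left_mem_Icc.2 hwy))).congr' ?_
  filter_upwards [hFTC] with k hk using hk.symm

theorem hasDerivAt_sub_div_of_tendsto (hg : Continuous g) (hL : 0 < L)
    (hQd : ∀ᶠ k in atTop, ∀ t ∈ Icc w y, HasDerivAt (Q k) (c - g t / Q k t) t)
    (hQL : ∀ᶠ k in atTop, ∀ t ∈ Icc w y, L ≤ Q k t)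
    (hlim : ∀ t ∈ Icc w y, Tendsto (Q · t) atTop (𝓝 (p t))) :
    ∀ t ∈ Ioo w y, HasDerivAt p (c - g t / p t) t := by
  have hpL : ∀ t ∈ Icc w y, L ≤ p t := fun t ht =>
    ge_of_tendsto (hlim t ht) (hQL.mono fun k hk => hk t ht)
  have hsub : ∀ s ∈ Icc w y, ∀ t ∈ Icc w y, s ≤ t →
      p t - p s = ∫ r in s..t, (c - g r / p r) := fun s hs t ht hst =>
    have hI : Icc s t ⊆ Icc w y := Icc_subset_Icc hs.1 ht.2
    sub_eq_integral_sub_div_of_tendsto hg hL hst (hQd.mono fun _ hk r hr => hk r (hI hr))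
      (hQL.mono fun _ hk r hr => hk r (hI hr)) fun r hr => hlim r (hI hr)
  obtain ⟨D, hD⟩ := exists_abs_sub_div_le hg c hL w y
  have hdist : ∀ s ∈ Icc w y, ∀ t ∈ Icc w y, s ≤ t → dist (p t) (p s) ≤ D * dist t s := by
    intro s hs t ht hst
    rw [Real.dist_eq, Real.dist_eq, hsub s hs t ht hst]
    refine intervalIntegral.norm_integral_le_of_norm_le_const (f := fun r => c - g r / p r)
      fun r hr => ?_
    rw [uIoc_of_le hst] at hr
    have hr' : r ∈ Icc w y := ⟨hs.1.trans hr.1.le, hr.2.trans ht.2⟩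
    exact hD r hr' _ (hpL r hr')
  have hpc : ContinuousOn p (Icc w y) := by
    refine (LipschitzOnWith.of_dist_le_mul (K := D.toNNReal) fun s hs t ht => ?_).continuousOn
    refine le_trans ?_ (mul_le_mul_of_nonneg_right (Real.le_coe_toNNReal D) dist_nonneg)
    rcases le_total s t with hst | hts
    · rw [dist_comm, dist_comm s]; exact hdist s hs t ht hst
    · exact hdist t ht s hs hts
  have hG : ContinuousOn (fun r => c - g r / p r) (Icc w y) :=
    continuousOn_const.sub (hg.continuousOn.div hpc fun r hr => (hL.trans_le (hpL r hr)).ne')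
  intro t ht
  have hwt : w ≤ t := ht.1.le
  have hIcc : Icc w t ⊆ Icc w y := Icc_subset_Icc le_rfl ht.2.le
  refine HasDerivAt.congr_of_eventuallyEq (f := fun x => p w + ∫ r in w..x, (c - g r / p r))
    ?_ ?_
  · refine (intervalIntegral.integral_hasDerivAt_right ?_ ?_ ?_).const_add _
    · rw [← uIcc_of_le hwt] at hIcc
      exact (hG.mono hIcc).intervalIntegrable
    · exact (hG.mono Ioo_subset_Icc_self).stronglyMeasurableAtFilter isOpen_Ioo t ht
    · exact hG.continuousAt (Icc_mem_nhds ht.1 ht.2)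
  · filter_upwards [Ioo_mem_nhds ht.1 ht.2] with x hx
    rw [← hsub w (left_mem_Icc.2 (hwt.trans ht.2.le)) x (Ioo_subset_Icc_self hx) hx.1.le]
    ring

end LimitOfSolutions

theorem exists_hasDerivAt_of_continuousOn_Ioo {g : ℝ → ℝ} {a b x₀ : ℝ}
    (hg : ContinuousOn g (Ioo a b)) (hx₀ : x₀ ∈ Ioo a b) :
    ∃ G : ℝ → ℝ, G x₀ = 0 ∧ ∀ x ∈ Ioo a b, HasDerivAt G (g x) x :=
  ⟨fun x => ∫ t in x₀..x, g t, intervalIntegral.integral_same, fun x hx =>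
    intervalIntegral.integral_hasDerivAt_right
      (hg.mono (ordConnected_Ioo.uIcc_subset hx₀ hx)).intervalIntegrable
      (hg.stronglyMeasurableAtFilter isOpen_Ioo x hx) (hg.continuousAt (Ioo_mem_nhds hx.1 hx.2))⟩

theorem tendsto_nhdsGT_zero_atBot_of_hasDerivAt_one_div {ζ r : ℝ → ℝ} {μ b : ℝ} (hμ : 0 < μ)
    (hb : 0 < b) (hd : ∀ x ∈ Ioo 0 b, HasDerivAt ζ (1 / r x) x)
    (hr : ∀ x ∈ Ioo 0 b, 0 < r x ∧ r x ≤ μ * x) : Tendsto ζ (𝓝[>] 0) atBot := by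
  set φ := fun x => ζ x - log x / μ
  have hφd : ∀ x ∈ Ioo 0 b, HasDerivAt φ (1 / r x - 1 / (μ * x)) x := fun x hx =>
    ((hd x hx).fun_sub ((hasDerivAt_log hx.1.ne').div_const μ)).congr_deriv (by field_simp)
  have hmono : MonotoneOn φ (Ioo 0 b) := by
    refine monotoneOn_of_deriv_nonneg (convex_Ioo 0 b)
      (fun x hx => (hφd x hx).continuousAt.continuousWithinAt)
      (fun x hx => (hφd x (interior_subset hx)).differentiableAt.differentiableWithinAt)
      fun x hx => ?_
    rw [interior_Ioo] at hx
    rw [(hφd x hx).deriv, sub_nonneg]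
    exact one_div_le_one_div_of_le (hr x hx).1 (hr x hx).2
  have hb2 : b / 2 ∈ Ioo 0 b := ⟨half_pos hb, half_lt_self hb⟩
  refine tendsto_atBot_mono' _ ?_ (tendsto_atBot_add_const_right _ (φ (b / 2))
    (tendsto_log_nhdsGT_zero.atBot_div_const hμ))
  filter_upwards [Ioo_mem_nhdsGT hb2.1] with x hx
  have := hmono ⟨hx.1, hx.2.trans hb2.2⟩ hb2 hx.2.le
  simp only [φ] at this ⊢
  linarith

theorem tendsto_nhdsLT_one_atTop_of_hasDerivAt_one_div {ζ r : ℝ → ℝ} {K : ℝ} (hK : 0 < K)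
    (hd : ∀ x ∈ Ioo (0 : ℝ) 1, HasDerivAt ζ (1 / r x) x)
    (hr : ∀ x ∈ Ioo (0 : ℝ) 1, 0 < r x ∧ r x ≤ K * (1 - x)) : Tendsto ζ (𝓝[<] 1) atTop := by
  have hmem : ∀ x ∈ Ioo (0 : ℝ) 1, 1 - x ∈ Ioo (0 : ℝ) 1 := fun x hx =>
    ⟨sub_pos.2 hx.2, by linarith [hx.1]⟩
  have hrefl := tendsto_nhdsGT_zero_atBot_of_hasDerivAt_one_div (ζ := fun x => -ζ (1 - x))
    (r := fun x => r (1 - x)) hK one_pos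
    (fun x hx => by simpa using ((hd _ (hmem x hx)).comp_const_sub 1 x).fun_neg)
    fun x hx => ⟨(hr _ (hmem x hx)).1, by simpa using (hr _ (hmem x hx)).2⟩
  have hsub : Tendsto (fun y : ℝ => 1 - y) (𝓝[<] 1) (𝓝[>] 0) := by
    refine tendsto_nhdsWithin_of_tendsto_nhds_of_eventually_within _ ?_ ?_
    · have : Tendsto (fun y : ℝ => 1 - y) (𝓝 1) (𝓝 (1 - 1)) := tendsto_const_nhds.sub tendsto_id
      exact (sub_self (1 : ℝ) ▸ this).mono_left nhdsWithin_le_nhds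
    · filter_upwards [self_mem_nhdsWithin] with y hy using sub_pos.2 (mem_Iio.1 hy)
  exact (tendsto_neg_atBot_atTop.comp (hrefl.comp hsub)).congr fun y => by simp

theorem StrictMonoOn.exists_continuous_inverse_Ioo {ζ : ℝ → ℝ} {a b : ℝ} (hab : a < b)
    (hmono : StrictMonoOn ζ (Ioo a b)) (hcont : ContinuousOn ζ (Ioo a b))
    (hbot : Tendsto ζ (𝓝[>] a) atBot) (htop : Tendsto ζ (𝓝[<] b) atTop) :
    ∃ q : ℝ → ℝ, Continuous q ∧ (∀ z, q z ∈ Ioo a b) ∧ (∀ z, ζ (q z) = z) ∧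
      (∀ x ∈ Ioo a b, q (ζ x) = x) ∧ Tendsto q atBot (𝓝 a) ∧ Tendsto q atTop (𝓝 b) := by
  have hsurj : Function.Surjective (fun x : Ioo a b => ζ x) := fun z => by
    obtain ⟨x, hx, hxz⟩ := hcont.surjOn_of_tendsto (nonempty_Ioo.2 hab)
      ((tendsto_comp_coe_Ioo_atBot hab).2 hbot) ((tendsto_comp_coe_Ioo_atTop hab).2 htop)
      (mem_univ z)
    exact ⟨⟨x, hx⟩, hxz⟩
  set e := StrictMono.orderIsoOfSurjective (fun x : Ioo a b => ζ x)
    (fun x y hxy => hmono x.2 y.2 hxy) hsurj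
  refine ⟨fun z => e.symm z, continuous_subtype_val.comp e.symm.continuous,
    fun z => (e.symm z).2, fun z => e.apply_symm_apply z,
    fun x hx => congrArg Subtype.val (e.symm_apply_apply ⟨x, hx⟩),
    ((tendsto_Ioo_atBot).1 e.symm.tendsto_atBot).mono_right nhdsWithin_le_nhds,
    ((tendsto_Ioo_atTop).1 e.symm.tendsto_atTop).mono_right nhdsWithin_le_nhds⟩

theorem exists_continuous_eq_mul_one_sub_mul {f : ℝ → ℝ} (hf : Differentiable ℝ f)
    (h0 : f 0 = 0) (h1 : f 1 = 0) :
    ∃ g : ℝ → ℝ, Continuous g ∧ g 0 = deriv f 0 ∧ g 1 = -deriv f 1 ∧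
      ∀ u, f u = u * (1 - u) * g u := by
  set g₀ := dslope f 0
  set g₁ := dslope g₀ 1
  have hf₀ : ∀ u, f u = u * g₀ u := fun u => by
    simpa using (sub_smul_dslope_of_zero h0 u).symm
  have hg₀1 : g₀ 1 = 0 := by simpa [h1] using (hf₀ 1).symm
  have hg₀ : ∀ u, g₀ u = (u - 1) * g₁ u := fun u => by
    simpa using (sub_smul_dslope_of_zero hg₀1 u).symm
  have hg₀c : Continuous g₀ := continuousOn_univ.1 <|
    (continuousOn_dslope univ_mem).2 ⟨hf.continuous.continuousOn, hf 0⟩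
  have hg₀d : DifferentiableAt ℝ g₀ 1 := (differentiableAt_dslope_of_ne one_ne_zero).2 (hf 1)
  refine ⟨fun u => -g₁ u, ?_, ?_, ?_, fun u => by rw [hf₀, hg₀]; ring⟩
  · exact (continuousOn_univ.1 <|
      (continuousOn_dslope univ_mem).2 ⟨hg₀c.continuousOn, hg₀d⟩).neg
  · have := hg₀ 0
    rw [show g₀ 0 = deriv f 0 from dslope_same f 0] at this
    linarith
  · have hderiv : HasDerivAt f (1 * g₀ 1 + 1 * deriv g₀ 1) 1 := by
      have := (hasDerivAt_id' (1 : ℝ)).fun_mul hg₀d.hasDerivAt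
      rwa [show (fun u => u * g₀ u) = f from funext fun u => (hf₀ u).symm] at this
    rw [hderiv.deriv, hg₀1, show deriv g₀ 1 = g₁ 1 from (dslope_same g₀ 1).symm]
    ring

theorem min_mul_one_sub_le {v u t : ℝ} (hvt : v ≤ t) (htu : t ≤ u) :
    min (v * (1 - v)) (u * (1 - u)) ≤ t * (1 - t) := by
  rcases le_total (t + v) 1 with h | h
  · exact (min_le_left _ _).trans (by nlinarith)
  · exact (min_le_right _ _).trans (by nlinarith)

theorem KPP.pos_of_mem_Ioo {f : ℝ → ℝ} (hf : KPP f) {u : ℝ} (hu : u ∈ Ioo (0 : ℝ) 1) : 0 < f u :=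
  (pos_iff_pos_of_mul_pos (hf.2.2.2.1 u hu.1 hu.2.ne)).1 (sub_pos.2 hu.2)

namespace IsKPPWave

variable {f q : ℝ → ℝ} {c : ℝ}

theorem mem_Ioo (hq : IsKPPWave f c q) (z : ℝ) : q z ∈ Ioo 0 1 := by
  have hmono : StrictMono q := strictMono_of_deriv_pos hq.2.2.2.2.2
  exact ⟨(hmono.monotone.le_of_tendsto hq.2.2.1 (z - 1)).trans_lt (hmono (by linarith)),
    (hmono (lt_add_one z)).trans_le (hmono.monotone.ge_of_tendsto hq.2.2.2.1 (z + 1))⟩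

theorem hasDerivAt (hq : IsKPPWave f c q) (z : ℝ) : HasDerivAt q (deriv q z) z :=
  ((hq.1.differentiable (by norm_num)) z).hasDerivAt

theorem hasDerivAt_deriv (hq : IsKPPWave f c q) (z : ℝ) :
    HasDerivAt (deriv q) (c * deriv q z - f (q z)) z := by
  have hq1 : ContDiff ℝ 1 (deriv q) :=
    (contDiff_succ_iff_deriv.1 (show ContDiff ℝ (1 + 1) q from hq.1)).2.2
  have := ((hq1.differentiable one_ne_zero) z).hasDerivAt
  rwa [show deriv (deriv q) z = c * deriv q z - f (q z) by linarith [hq.2.1 z]] at this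

end IsKPPWave

namespace KPP

variable {f : ℝ → ℝ} {c : ℝ}

theorem not_isKPPWave_of_nonpos (hf : KPP f) (hc : c ≤ 0) (q : ℝ → ℝ) : ¬ IsKPPWave f c q := by
  intro hq
  have hanti : StrictAnti (deriv q) := strictAnti_of_deriv_neg fun z => by
    rw [(hq.hasDerivAt_deriv z).deriv]
    nlinarith [hq.2.2.2.2.2 z, hf.pos_of_mem_Ioo (hq.mem_Ioo z)]
  have hlim := tendsto_atBot_of_hasDerivAt_ge (a := 0) (hq.2.2.2.2.2 0)
    (fun x _ => hq.hasDerivAt x) fun x hx => hanti.antitone hx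
  exact not_tendsto_nhds_of_tendsto_atBot hlim 0 hq.2.2.1

theorem not_isKPPWave_of_pos_of_lt (hf : KPP f) (hc0 : 0 < c) (hc : c < c0 f) (q : ℝ → ℝ) :
    ¬ IsKPPWave f c q := by
  intro hq
  obtain ⟨hf1, hf0, -, -, ha, -, -⟩ := hf
  set a := deriv f 0
  have hca : c ^ 2 < 4 * a := by
    have : c < 2 * √a := hc
    nlinarith [sq_sqrt ha.le, sqrt_nonneg a]
  set ε := (a - c ^ 2 / 4) / 2
  have hε : 0 < ε := by simp only [ε]; linarith
  have hnear : ∀ᶠ u in 𝓝 0, 0 ≤ u → (a - ε) * u ≤ f u := by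
    filter_upwards [(hasDerivAt_iff_isLittleO.1
      ((hf1.differentiable one_ne_zero) 0).hasDerivAt).def hε] with u hu hu0
    simp only [hf0, sub_zero, smul_eq_mul, Real.norm_eq_abs, abs_of_nonneg hu0] at hu
    nlinarith [abs_le.1 hu]
  obtain ⟨z₀, hz₀⟩ := eventually_atBot.1 (hq.2.2.1.eventually hnear)
  -- `w = q e^{-cz/2}` would be a positive solution of `w'' ≤ -ε w` near `-∞`
  set e := fun z : ℝ => exp (-(c / 2) * z)
  have he : ∀ z, HasDerivAt e (-(c / 2) * e z) z := fun z => by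
    simpa [e, mul_comm] using ((hasDerivAt_id' z).const_mul (-(c / 2))).exp
  refine not_forall_pos_of_hasDerivAt_le_neg_mul (w := fun z => q z * e z)
    (W := fun z => (deriv q z - c / 2 * q z) * e z)
    (W' := fun z => (c ^ 2 / 4 * q z - f (q z)) * e z) (a := z₀) hε
    (fun z _ => ((hq.hasDerivAt z).mul (he z)).congr_deriv (by ring))
    (fun z _ => (((hq.hasDerivAt_deriv z).fun_sub ((hq.hasDerivAt z).const_mul (c / 2))).mul
      (he z)).congr_deriv (by ring))
    (fun z hz => ?_) fun z _ => mul_pos (hq.mem_Ioo z).1 (exp_pos _)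
  have hfq := hz₀ z hz (hq.mem_Ioo z).1.le
  have hez : 0 < e z := exp_pos _
  have : c ^ 2 / 4 * q z - f (q z) ≤ -ε * q z := by simp only [ε] at hfq ⊢; linarith
  nlinarith

theorem not_isKPPWave_of_lt (hf : KPP f) (hc : c < c0 f) (q : ℝ → ℝ) : ¬ IsKPPWave f c q := by
  rcases le_or_gt c 0 with hc0 | hc0
  exacts [hf.not_isKPPWave_of_nonpos hc0 q, hf.not_isKPPWave_of_pos_of_lt hc0 hc q]

end KPP

theorem KPP.exists_mul_le_and_le_mul {f : ℝ → ℝ} (hf : KPP f) :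
    ∃ ρ L : ℝ, 0 < ρ ∧ ∀ u ∈ Icc (0 : ℝ) 1, ρ * (u * (1 - u)) ≤ f u ∧ f u ≤ L * (u * (1 - u)) := by
  obtain ⟨g, hgc, hg0, hg1, hfg⟩ :=
    exists_continuous_eq_mul_one_sub_mul (hf.1.differentiable one_ne_zero) hf.2.1 hf.2.2.1
  have hgpos : ∀ u ∈ Icc (0 : ℝ) 1, 0 < g u := by
    rintro u ⟨hu0, hu1⟩
    rcases hu0.eq_or_lt with rfl | hu0
    · exact hg0 ▸ hf.2.2.2.2.1
    rcases hu1.eq_or_lt with rfl | hu1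
    · exact hg1 ▸ neg_pos.2 hf.2.2.2.2.2.1
    have hfu := hf.pos_of_mem_Ioo ⟨hu0, hu1⟩
    rw [hfg] at hfu
    exact pos_of_mul_pos_right hfu (mul_pos hu0 (sub_pos.2 hu1)).le
  obtain ⟨u₀, hu₀, hmin⟩ := isCompact_Icc.exists_isMinOn (nonempty_Icc.2 zero_le_one)
    hgc.continuousOn
  obtain ⟨u₁, -, hmax⟩ := isCompact_Icc.exists_isMaxOn (nonempty_Icc.2 zero_le_one)
    hgc.continuousOn
  refine ⟨g u₀, g u₁, hgpos u₀ hu₀, fun u hu => ?_⟩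
  have hu' : 0 ≤ u * (1 - u) := mul_nonneg hu.1 (sub_nonneg.2 hu.2)
  rw [hfg, mul_comm _ (g u)]
  exact ⟨mul_le_mul_of_nonneg_right (hmin hu) hu', mul_le_mul_of_nonneg_right (hmax hu) hu'⟩

theorem exists_pos_sub_mul_eq {a c : ℝ} (ha : 0 < a) (hc : 2 * √a ≤ c) :
    ∃ μ, 0 < μ ∧ (c - μ) * μ = a := by
  have hc0 : 0 < c := (by positivity : 0 < 2 * √a).trans_le hc
  have hdisc : 0 ≤ c ^ 2 - 4 * a := by nlinarith [sq_sqrt ha.le, sqrt_nonneg a]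
  refine ⟨(c - √(c ^ 2 - 4 * a)) / 2, half_pos (sub_pos.2 ?_), ?_⟩
  · rw [sqrt_lt' hc0]
    linarith
  · linear_combination (-1 / 4 : ℝ) * sq_sqrt hdisc

-- Parameters for which the region `β u(1-u) ≤ p ≤ min(μu, K(1-u))`, `0 < u < 1`, is invariant
-- under the backward flow of `p' = c - f(u) / p`.
structure IsTrappingRegion (f : ℝ → ℝ) (c β μ K : ℝ) : Prop where
  speed_nonneg : 0 ≤ c
  pos : 0 < β
  le_slope_zero : β ≤ μ
  le_slope_one : β ≤ K
  lower : ∀ u ∈ Icc (0 : ℝ) 1, β * (c + β) * (u * (1 - u)) ≤ f u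
  upper_zero : ∀ u ∈ Icc (0 : ℝ) 1, f u ≤ (c - μ) * μ * u
  upper_one : ∀ u ∈ Icc (0 : ℝ) 1, f u ≤ (c + K) * K * (1 - u)

theorem KPP.exists_isTrappingRegion {f : ℝ → ℝ} (hf : KPP f) {c : ℝ} (hc : c0 f ≤ c) :
    ∃ β μ K, IsTrappingRegion f c β μ K := by
  obtain ⟨ρ, L, hρ, hfρL⟩ := hf.exists_mul_le_and_le_mul
  obtain ⟨-, -, -, -, ha, -, hfa⟩ := hf
  have hc0 : 0 < c := lt_of_lt_of_le (by unfold c0; positivity) hc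
  obtain ⟨μ, hμ, hμa⟩ := exists_pos_sub_mul_eq ha hc
  set β := min (min μ 1) (ρ / (c + 1))
  have hβ : 0 < β := lt_min (lt_min hμ one_pos) (by positivity)
  have hβ1 : β ≤ 1 := (min_le_left _ _).trans (min_le_right _ _)
  have hβρ : β * (c + β) ≤ ρ := calc
    β * (c + β) ≤ ρ / (c + 1) * (c + 1) := by
      gcongr
      exact min_le_right _ _
    _ = ρ := div_mul_cancel₀ _ (by positivity)
  refine ⟨β, μ, max 1 L, ⟨hc0.le, hβ, (min_le_left _ _).trans (min_le_left _ _),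
    hβ1.trans (le_max_left _ _), fun u hu => ?_, fun u hu => ?_, fun u hu => ?_⟩⟩
  · have : 0 ≤ u * (1 - u) := mul_nonneg hu.1 (sub_nonneg.2 hu.2)
    exact (mul_le_mul_of_nonneg_right hβρ this).trans (hfρL u hu).1
  · rw [hμa]
    exact hfa u hu.1
  · have hK : 1 ≤ max 1 L := le_max_left 1 L
    have h1u : 0 ≤ 1 - u := sub_nonneg.2 hu.2
    calc f u ≤ L * (u * (1 - u)) := (hfρL u hu).2
      _ ≤ max 1 L * (1 * (1 - u)) := by
        gcongr
        · exact mul_nonneg hu.1 h1u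
        · exact le_max_right 1 L
        · exact hu.2
      _ ≤ (c + max 1 L) * max 1 L * (1 - u) := by
        rw [one_mul]
        gcongr
        nlinarith

namespace IsTrappingRegion

variable {f P : ℝ → ℝ} {c β μ K m v u : ℝ}

theorem nonneg (h : IsTrappingRegion f c β μ K) {t : ℝ} (ht : t ∈ Icc (0 : ℝ) 1) : 0 ≤ f t :=
  le_trans (mul_nonneg (mul_nonneg h.pos.le (add_nonneg h.speed_nonneg h.pos.le))
    (mul_nonneg ht.1 (sub_nonneg.2 ht.2))) (h.lower t ht)

theorem lower_le_slope_zero (h : IsTrappingRegion f c β μ K) {x : ℝ} (hx : x ∈ Icc (0 : ℝ) 1) :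
    β * (x * (1 - x)) ≤ μ * x :=
  calc β * (x * (1 - x)) ≤ β * x :=
        mul_le_mul_of_nonneg_left (by nlinarith [hx.1]) h.pos.le
    _ ≤ μ * x := mul_le_mul_of_nonneg_right h.le_slope_zero hx.1

theorem lower_le_slope_one (h : IsTrappingRegion f c β μ K) {x : ℝ} (hx : x ∈ Icc (0 : ℝ) 1) :
    β * (x * (1 - x)) ≤ K * (1 - x) := by
  rw [← mul_assoc]
  exact mul_le_mul_of_nonneg_right ((mul_le_of_le_one_right h.pos.le hx.2).trans h.le_slope_one)
    (sub_nonneg.2 hx.2)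

theorem lower_le_of_sub_div_max (h : IsTrappingRegion f c β μ K) (hv : 0 < v) (hu : u < 1)
    (hm : 0 < m) (hmℓ : ∀ t ∈ Icc v u, m ≤ β * (t * (1 - t))) (hP : ContinuousOn P (Icc v u))
    (hPd : ∀ t ∈ Ioo v u, HasDerivAt P (c - f t / max (P t) m) t)
    (hPu : β * (u * (1 - u)) ≤ P u) : ∀ t ∈ Icc v u, β * (t * (1 - t)) ≤ P t := by
  refine le_on_Icc_of_deriv_le_of_lt (d₁ := fun t => β * (1 - 2 * t)) (by fun_prop) hP
    (fun t _ => ?_) hPd (fun t ht hlt => ?_) hPu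
  · exact (((hasDerivAt_id' t).fun_mul ((hasDerivAt_const t 1).fun_sub
      (hasDerivAt_id' t))).const_mul β).congr_deriv (by ring)
  have ht01 : t ∈ Icc (0 : ℝ) 1 := ⟨hv.le.trans ht.1.le, ht.2.le.trans hu.le⟩
  have hmt := hmℓ t (Ioo_subset_Icc_self ht)
  have hmax : max (P t) m ≤ β * (t * (1 - t)) := max_le hlt.le hmt
  have hflow : (c - β * (1 - 2 * t)) * (β * (t * (1 - t))) ≤ f t := by
    refine le_trans ?_ (h.lower t ht01)
    have : 0 ≤ β * (t * (1 - t)) := hm.le.trans hmt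
    nlinarith [h.pos, ht01.1]
  have : f t / (β * (t * (1 - t))) ≤ f t / max (P t) m :=
    div_le_div_of_nonneg_left (h.nonneg ht01) (hm.trans_le (le_max_right _ _)) hmax
  have : c - β * (1 - 2 * t) ≤ f t / (β * (t * (1 - t))) := by
    rw [le_div_iff₀ (hm.trans_le hmt)]
    exact hflow
  linarith

theorem le_mul_of_sub_div_max (h : IsTrappingRegion f c β μ K) (hv : 0 < v) (hu : u < 1)
    (hP : ContinuousOn P (Icc v u)) (hPd : ∀ t ∈ Ioo v u, HasDerivAt P (c - f t / max (P t) m) t)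
    (hPu : P u ≤ μ * u) : ∀ t ∈ Icc v u, P t ≤ μ * t := by
  refine le_on_Icc_of_deriv_le_of_lt (d₂ := fun _ => μ) hP (by fun_prop) hPd
    (fun t _ => by simpa using (hasDerivAt_id' t).const_mul μ) (fun t ht hlt => ?_) hPu
  have ht01 : t ∈ Icc (0 : ℝ) 1 := ⟨hv.le.trans ht.1.le, ht.2.le.trans hu.le⟩
  have hμt : 0 < μ * t := mul_pos (h.pos.trans_le h.le_slope_zero) (hv.trans ht.1)
  have : f t / max (P t) m ≤ f t / (μ * t) :=
    div_le_div_of_nonneg_left (h.nonneg ht01) hμt (hlt.le.trans (le_max_left _ _))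
  have : f t / (μ * t) ≤ c - μ := by
    rw [div_le_iff₀ hμt]
    linarith [h.upper_zero t ht01]
  linarith

theorem le_mul_one_sub_of_sub_div_max (h : IsTrappingRegion f c β μ K) (hv : 0 < v) (hu : u < 1)
    (hP : ContinuousOn P (Icc v u)) (hPd : ∀ t ∈ Ioo v u, HasDerivAt P (c - f t / max (P t) m) t)
    (hPu : P u ≤ K * (1 - u)) : ∀ t ∈ Icc v u, P t ≤ K * (1 - t) := by
  refine le_on_Icc_of_deriv_le_of_lt (d₂ := fun _ => -K) hP (by fun_prop) hPd
    (fun t _ => by simpa using ((hasDerivAt_const t 1).fun_sub (hasDerivAt_id' t)).const_mul K)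
    (fun t ht hlt => ?_) hPu
  have ht01 : t ∈ Icc (0 : ℝ) 1 := ⟨hv.le.trans ht.1.le, ht.2.le.trans hu.le⟩
  have hKt : 0 < K * (1 - t) :=
    mul_pos (h.pos.trans_le h.le_slope_one) (sub_pos.2 (ht.2.trans hu))
  have : f t / max (P t) m ≤ f t / (K * (1 - t)) :=
    div_le_div_of_nonneg_left (h.nonneg ht01) hKt (hlt.le.trans (le_max_left _ _))
  have : f t / (K * (1 - t)) ≤ c + K := by
    rw [div_le_iff₀ hKt]
    linarith [h.upper_one t ht01]
  linarith

theorem exists_solution_Icc (h : IsTrappingRegion f c β μ K) (hf : Continuous f) (hv : 0 < v)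
    (hvu : v ≤ u) (hu : u < 1) :
    ∃ P : ℝ → ℝ, ContinuousOn P (Icc v u) ∧ P u = β * (u * (1 - u)) ∧
      (∀ t ∈ Ioo v u, HasDerivAt P (c - f t / P t) t) ∧
      ∀ t ∈ Icc v u, β * (t * (1 - t)) ≤ P t ∧ P t ≤ μ * t ∧ P t ≤ K * (1 - t) := by
  -- truncating `p` at `m` makes the field Lipschitz; the lower barrier keeps `p` above `m`
  set m := β * min (v * (1 - v)) (u * (1 - u))
  have hm : 0 < m := mul_pos h.pos (lt_min (mul_pos hv (by linarith))
    (mul_pos (hv.trans_le hvu) (by linarith)))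
  have hmℓ : ∀ t ∈ Icc v u, m ≤ β * (t * (1 - t)) := fun t ht =>
    mul_le_mul_of_nonneg_left (min_mul_one_sub_le ht.1 ht.2) h.pos.le
  obtain ⟨P, hPu, hPd⟩ := exists_hasDerivWithinAt_sub_div_max hf c hm hvu (β * (u * (1 - u)))
  have hPc : ContinuousOn P (Icc v u) := fun t ht => (hPd t ht).continuousWithinAt
  have hPd' : ∀ t ∈ Ioo v u, HasDerivAt P (c - f t / max (P t) m) t := fun t ht =>
    (hPd t (Ioo_subset_Icc_self ht)).hasDerivAt (Icc_mem_nhds ht.1 ht.2)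
  have hlow := h.lower_le_of_sub_div_max hv hu hm hmℓ hPc hPd' hPu.ge
  have hu01 : u ∈ Icc (0 : ℝ) 1 := ⟨(hv.trans_le hvu).le, hu.le⟩
  have hμ := h.le_mul_of_sub_div_max hv hu hPc hPd' (hPu ▸ h.lower_le_slope_zero hu01)
  have hK := h.le_mul_one_sub_of_sub_div_max hv hu hPc hPd' (hPu ▸ h.lower_le_slope_one hu01)
  refine ⟨P, hPc, hPu, fun t ht => ?_, fun t ht => ⟨hlow t ht, hμ t ht, hK t ht⟩⟩
  have htI := Ioo_subset_Icc_self ht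
  simpa only [max_eq_left ((hmℓ t htI).trans (hlow t htI))] using hPd' t ht

theorem le_of_Icc_subset (h : IsTrappingRegion f c β μ K) {P₁ P₂ : ℝ → ℝ} {v₁ u₁ v₂ u₂ : ℝ}
    (hv₁ : 0 < v₁) (hv : v₂ ≤ v₁) (hu : u₁ ≤ u₂) (hu₂ : u₂ < 1)
    (hP₁ : ContinuousOn P₁ (Icc v₁ u₁)) (hd₁ : ∀ t ∈ Ioo v₁ u₁, HasDerivAt P₁ (c - f t / P₁ t) t)
    (hP₁u : P₁ u₁ = β * (u₁ * (1 - u₁))) (hP₂ : ContinuousOn P₂ (Icc v₂ u₂))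
    (hd₂ : ∀ t ∈ Ioo v₂ u₂, HasDerivAt P₂ (c - f t / P₂ t) t)
    (hlow₂ : ∀ t ∈ Icc v₂ u₂, β * (t * (1 - t)) ≤ P₂ t) : ∀ t ∈ Icc v₁ u₁, P₁ t ≤ P₂ t := by
  intro x hx
  have hI : Icc v₁ u₁ ⊆ Icc v₂ u₂ := Icc_subset_Icc hv hu
  refine le_on_Icc_of_hasDerivAt_sub_div
    (fun t ht => h.nonneg ⟨hv₁.le.trans ht.1.le, ht.2.le.trans (hu.trans hu₂.le)⟩) hP₁
    (hP₂.mono hI) hd₁ (fun t ht => hd₂ t (Ioo_subset_Ioo hv hu ht)) (fun t ht => ?_) ?_ x hx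
  · refine lt_of_lt_of_le ?_ (hlow₂ t (hI (Ioo_subset_Icc_self ht)))
    exact mul_pos h.pos (mul_pos (hv₁.trans ht.1) (by linarith [ht.2]))
  · rw [hP₁u]
    exact hlow₂ u₁ (hI (right_mem_Icc.2 (hx.1.trans hx.2)))

theorem exists_monotone_solutions (h : IsTrappingRegion f c β μ K) (hf : Continuous f) :
    ∃ Q : ℕ → ℝ → ℝ, (∀ x, Monotone (Q · x)) ∧ (∀ k x, β * (x * (1 - x)) ≤ Q k x) ∧
      (∀ k, ∀ x ∈ Icc (0 : ℝ) 1, Q k x ≤ μ * x ∧ Q k x ≤ K * (1 - x)) ∧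
      ∀ w y, 0 < w → y < 1 →
        ∀ᶠ k in atTop, ∀ t ∈ Icc w y, HasDerivAt (Q k) (c - f t / Q k t) t := by
  set ε : ℕ → ℝ := fun k => 1 / ((k : ℝ) + 2)
  have hε : ∀ k, 0 < ε k := fun k => by positivity
  have hε2 : ∀ k, ε k ≤ 1 - ε k := fun k => by
    have : ε k ≤ 1 / 2 := one_div_le_one_div_of_le two_pos (by simp)
    linarith
  have hεanti : Antitone ε := fun k l hkl =>
    one_div_le_one_div_of_le (by positivity) (by gcongr)
  choose P hPc hPu hPd hPb using fun k =>
    h.exists_solution_Icc hf (hε k) (hε2 k) (by linarith [hε k] : 1 - ε k < 1)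
  classical
  set I : ℕ → Set ℝ := fun k => Icc (ε k) (1 - ε k)
  have hlow : ∀ k x, β * (x * (1 - x)) ≤ if x ∈ I k then P k x else β * (x * (1 - x)) :=
    fun k x => by split_ifs with hx; exacts [(hPb k x hx).1, le_rfl]
  -- extending by the lower barrier off `I k` makes the family monotone on all of `ℝ`
  refine ⟨fun k x => if x ∈ I k then P k x else β * (x * (1 - x)), fun x k l hkl => ?_, hlow,
    fun k x hx => ?_, fun w y hw hy => ?_⟩
  · have hIkl : I k ⊆ I l := Icc_subset_Icc (hεanti hkl) (by linarith [hεanti hkl])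
    by_cases hx : x ∈ I k
    · simp only [if_pos hx, if_pos (hIkl hx)]
      exact h.le_of_Icc_subset (hε k) (hεanti hkl) (by linarith [hεanti hkl])
        (by linarith [hε l]) (hPc k) (hPd k) (hPu k) (hPc l) (hPd l) (fun t ht => (hPb l t ht).1)
        x hx
    · simpa only [if_neg hx] using hlow l x
  · dsimp only
    split_ifs with hxk
    · exact (hPb k x hxk).2
    · exact ⟨h.lower_le_slope_zero hx, h.lower_le_slope_one hx⟩
  · have hεlt : ∀ᶠ k in atTop, ε k < min w (1 - y) :=
      (tendsto_const_nhds.div_atTop (tendsto_atTop_add_const_right _ 2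
        tendsto_natCast_atTop_atTop)).eventually (eventually_lt_nhds (lt_min hw (by linarith)))
    filter_upwards [hεlt] with k hk t ht
    have htI : t ∈ Ioo (ε k) (1 - ε k) :=
      ⟨(hk.trans_le (min_le_left _ _)).trans_le ht.1,
        ht.2.trans_lt (by linarith [min_le_right w (1 - y)])⟩
    have heq : (fun x => if x ∈ I k then P k x else β * (x * (1 - x))) =ᶠ[𝓝 t] P k := by
      filter_upwards [Ioo_mem_nhds htI.1 htI.2] with x hx
      rw [if_pos (Ioo_subset_Icc_self hx)]
    rw [heq.eq_of_nhds]
    exact (hPd k t htI).congr_of_eventuallyEq heq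

theorem exists_profile (h : IsTrappingRegion f c β μ K) (hf : Continuous f) :
    ∃ p : ℝ → ℝ, ∀ x ∈ Ioo (0 : ℝ) 1,
      HasDerivAt p (c - f x / p x) x ∧ 0 < p x ∧ p x ≤ μ * x ∧ p x ≤ K * (1 - x) := by
  obtain ⟨Q, hmono, hlow, hup, hder⟩ := h.exists_monotone_solutions hf
  have hbdd : ∀ x ∈ Icc (0 : ℝ) 1, BddAbove (range (Q · x)) := fun x hx =>
    ⟨μ * x, by rintro _ ⟨k, rfl⟩; exact (hup k x hx).1⟩
  have hlim : ∀ x ∈ Icc (0 : ℝ) 1, Tendsto (Q · x) atTop (𝓝 (⨆ k, Q k x)) := fun x hx =>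
    tendsto_atTop_ciSup (hmono x) (hbdd x hx)
  refine ⟨fun x => ⨆ k, Q k x, fun x hx => ⟨?_, ?_, ciSup_le fun k => (hup k x
    (Ioo_subset_Icc_self hx)).1, ciSup_le fun k => (hup k x (Ioo_subset_Icc_self hx)).2⟩⟩
  · have hw : 0 < x / 2 := half_pos hx.1
    have hy : (1 + x) / 2 < 1 := by linarith [hx.2]
    have hL : 0 < β * min (x / 2 * (1 - x / 2)) ((1 + x) / 2 * (1 - (1 + x) / 2)) :=
      mul_pos h.pos (lt_min (mul_pos hw (by linarith [hx.2])) (mul_pos (by linarith [hx.1])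
        (by linarith)))
    refine hasDerivAt_sub_div_of_tendsto hf hL (hder _ _ hw hy)
      (Eventually.of_forall fun k t ht =>
        (mul_le_mul_of_nonneg_left (min_mul_one_sub_le ht.1 ht.2) h.pos.le).trans (hlow k t))
      (fun t ht => hlim t ⟨hw.le.trans ht.1, ht.2.trans hy.le⟩) x
      ⟨by linarith [hx.1], by linarith [hx.2]⟩
  · refine lt_of_lt_of_le ?_ (le_ciSup_of_le (hbdd x (Ioo_subset_Icc_self hx)) 0 (hlow 0 x))
    exact mul_pos h.pos (mul_pos hx.1 (sub_pos.2 hx.2))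

end IsTrappingRegion

theorem isKPPWave_of_hasDerivAt {f q v : ℝ → ℝ} {c : ℝ} (hf : Continuous f)
    (hq : ∀ z, HasDerivAt q (v z) z) (hv : ∀ z, HasDerivAt v (c * v z - f (q z)) z)
    (hbot : Tendsto q atBot (𝓝 0)) (htop : Tendsto q atTop (𝓝 1)) (h0 : q 0 = 1 / 2)
    (hpos : ∀ z, 0 < v z) : IsKPPWave f c q := by
  have hdq : deriv q = v := funext fun z => (hq z).deriv
  have hdv : deriv v = fun z => c * v z - f (q z) := funext fun z => (hv z).deriv
  have hqc : Continuous q := continuous_iff_continuousAt.2 fun z => (hq z).continuousAt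
  have hvc : Continuous v := continuous_iff_continuousAt.2 fun z => (hv z).continuousAt
  refine ⟨?_, fun z => by rw [hdq, hdv]; ring, hbot, htop, h0, fun z => hdq ▸ hpos z⟩
  rw [show (2 : WithTop ℕ∞) = 1 + 1 from rfl, contDiff_succ_iff_deriv, hdq,
    contDiff_one_iff_deriv, hdv]
  exact ⟨fun z => (hq z).differentiableAt, by simp, fun z => (hv z).differentiableAt,
    (continuous_const.mul hvc).sub (hf.comp hqc)⟩

theorem exists_isKPPWave_of_profile {f p : ℝ → ℝ} {c μ K : ℝ} (hf : Continuous f) (hμ : 0 < μ)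
    (hK : 0 < K) (hp : ∀ x ∈ Ioo (0 : ℝ) 1,
      HasDerivAt p (c - f x / p x) x ∧ 0 < p x ∧ p x ≤ μ * x ∧ p x ≤ K * (1 - x)) :
    ∃ q, IsKPPWave f c q := by
  have hpc : ContinuousOn (fun x => 1 / p x) (Ioo 0 1) := continuousOn_const.div
    (fun x hx => (hp x hx).1.continuousAt.continuousWithinAt) fun x hx => (hp x hx).2.1.ne'
  obtain ⟨ζ, hζ0, hζd⟩ := exists_hasDerivAt_of_continuousOn_Ioo hpc
    (show (1 / 2 : ℝ) ∈ Ioo 0 1 by norm_num)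
  have hζc : ContinuousOn ζ (Ioo 0 1) := fun x hx => (hζd x hx).continuousAt.continuousWithinAt
  have hmono : StrictMonoOn ζ (Ioo 0 1) := strictMonoOn_of_deriv_pos (convex_Ioo 0 1) hζc
    fun x hx => by
      rw [interior_Ioo] at hx
      rw [(hζd x hx).deriv]
      exact one_div_pos.2 (hp x hx).2.1
  have hbot : Tendsto ζ (𝓝[>] 0) atBot := tendsto_nhdsGT_zero_atBot_of_hasDerivAt_one_div hμ
    one_pos hζd fun x hx => ⟨(hp x hx).2.1, (hp x hx).2.2.1⟩
  have htop : Tendsto ζ (𝓝[<] 1) atTop := tendsto_nhdsLT_one_atTop_of_hasDerivAt_one_div hK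
    hζd fun x hx => ⟨(hp x hx).2.1, (hp x hx).2.2.2⟩
  obtain ⟨q, hqc, hqmem, hζq, hqζ, hq0, hq1⟩ :=
    hmono.exists_continuous_inverse_Ioo one_pos hζc hbot htop
  have hqd : ∀ z, HasDerivAt q (p (q z)) z := fun z => by
    simpa using HasDerivAt.of_local_left_inverse hqc.continuousAt (hζd (q z) (hqmem z))
      (one_div_pos.2 (hp _ (hqmem z)).2.1).ne' (Eventually.of_forall hζq)
  refine ⟨q, isKPPWave_of_hasDerivAt hf hqd (fun z => ?_) hq0 hq1 ?_
    fun z => (hp _ (hqmem z)).2.1⟩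
  · refine ((hp _ (hqmem z)).1.comp z (hqd z)).congr_deriv ?_
    field_simp [(hp _ (hqmem z)).2.1.ne']
  · simpa only [hζ0] using hqζ (1 / 2) (by norm_num)

theorem KPP.exists_isKPPWave {f : ℝ → ℝ} (hf : KPP f) {c : ℝ} (hc : c0 f ≤ c) :
    ∃ q, IsKPPWave f c q := by
  obtain ⟨β, μ, K, h⟩ := hf.exists_isTrappingRegion hc
  obtain ⟨p, hp⟩ := h.exists_profile hf.1.continuous
  exact exists_isKPPWave_of_profile hf.1.continuous (h.pos.trans_le h.le_slope_zero)
    (h.pos.trans_le h.le_slope_one) hp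

/-- For every `c ≥ c₀` the KPP traveling wave problem has a solution, and
for every `c < c₀` it has none. -/
theorem stmt0 (f : ℝ → ℝ) (hf : KPP f) (c : ℝ) :
    (∃ q : ℝ → ℝ, IsKPPWave f c q) ↔ c0 f ≤ c :=
  ⟨fun ⟨q, hq⟩ => not_lt.1 fun hc => hf.not_isKPPWave_of_lt hc q hq, hf.exists_isKPPWave⟩
end
end

section
/- Let c*(β) be the semi-wave speed as above and c₀ = 2√(f'(0)). Then there exists a unique β* > c₀ such that c*(β) - β + c₀ > 0 for β < β*, = 0 for β = β*, and < 0 for β > β*. Moreover β* = P(-c₀) + c₀, where P(γ) = -μ U'(0;γ). -/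
open Filter Set Real

noncomputable section

/-- A rightward traveling semi-wave with speed `c`:
`q'' + (c-β)q' + f(q) = 0` on `(-∞,0)`, `q(0)=0`, `q(-∞)=1`, `-μ q'(0)=c`, `q' < 0`. -/
def IsSemiWave (f : ℝ → ℝ) (μ β c : ℝ) (q : ℝ → ℝ) : Prop :=
  ContDiffOn ℝ 2 q (Set.Iic 0) ∧
  (∀ z < (0:ℝ), deriv (deriv q) z + (c - β) * deriv q z + f (q z) = 0) ∧
  q 0 = 0 ∧ Filter.Tendsto q Filter.atBot (nhds 1) ∧ (-μ) * deriv q 0 = c ∧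
  ∀ z ≤ (0:ℝ), deriv q z < 0

/-- The unique strictly decreasing solution `U(·;γ)` on `(-∞,0]` of
`q'' + γ q' + f(q) = 0` with `q(0)=0`, `q(-∞)=1`, `q' < 0`. -/
def IsUProfile (f : ℝ → ℝ) (γ : ℝ) (U : ℝ → ℝ) : Prop :=
  ContDiffOn ℝ 2 U (Set.Iic 0) ∧
  (∀ z < (0:ℝ), deriv (deriv U) z + γ * deriv U z + f (U z) = 0) ∧
  U 0 = 0 ∧ Filter.Tendsto U Filter.atBot (nhds 1) ∧ ∀ z ≤ (0:ℝ), deriv U z < 0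

namespace UP

variable {f : ℝ → ℝ} {γ : ℝ} {q : ℝ → ℝ}

theorem diffAt (hq : IsUProfile f γ q) {z : ℝ} (hz : z ≤ 0) : DifferentiableAt ℝ q z := by
  by_contra h
  have := deriv_zero_of_not_differentiableAt h
  have := hq.2.2.2.2 z hz
  linarith

theorem contOn (hq : IsUProfile f γ q) : ContinuousOn q (Iic 0) := fun z hz =>
  (diffAt hq hz).continuousAt.continuousWithinAt

theorem anti (hq : IsUProfile f γ q) : StrictAntiOn q (Iic 0) := by
  apply strictAntiOn_of_deriv_neg (convex_Iic 0) (contOn hq)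
  intro z hz
  rw [interior_Iic] at hz
  exact hq.2.2.2.2 z hz.le

theorem pos (hq : IsUProfile f γ q) {z : ℝ} (hz : z < 0) : 0 < q z := by
  have := anti hq (le_of_lt hz) (le_refl (0:ℝ)) hz
  rw [hq.2.2.1] at this
  exact this

theorem nonneg (hq : IsUProfile f γ q) {z : ℝ} (hz : z ≤ 0) : 0 ≤ q z := by
  rcases eq_or_lt_of_le hz with h | h
  · rw [h, hq.2.2.1]
  · exact (pos hq h).le

theorem lt_one (hq : IsUProfile f γ q) {z : ℝ} (hz : z ≤ 0) : q z < 1 := by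
  by_contra h
  push_neg at h
  have h1 : ∀ w ≤ z - 1, q (z - 1) ≤ q w := by
    intro w hw
    rcases eq_or_lt_of_le hw with h' | h'
    · rw [h']
    · exact (anti hq (show w ∈ Iic (0:ℝ) by simp; linarith)
        (show z - 1 ∈ Iic (0:ℝ) by simp; linarith) h').le
  have h2 : 1 < q (z - 1) := by
    have := anti hq (by linarith : z - 1 ≤ (0:ℝ)) hz (by linarith)
    linarith
  have h3 : q (z-1) ≤ 1 := by
    have hev : ∀ᶠ w in atBot, q (z - 1) ≤ q w := eventually_atBot.2 ⟨z - 1, h1⟩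
    exact ge_of_tendsto hq.2.2.2.1 hev
  linarith

theorem surj (hq : IsUProfile f γ q) {u : ℝ} (h0 : 0 ≤ u) (h1 : u < 1) :
    ∃ z, z ≤ 0 ∧ q z = u := by
  have : ∀ᶠ w in atBot, u < q w := hq.2.2.2.1.eventually_const_lt h1
  obtain ⟨z1, hz1⟩ := (this.and (eventually_le_atBot 0)).exists
  have hsub : Icc z1 0 ⊆ Iic 0 := fun w hw => hw.2
  have := intermediate_value_Icc' hz1.2 ((contOn hq).mono hsub)
  have hu : u ∈ Icc (q 0) (q z1) := by
    constructor
    · rw [hq.2.2.1]; exact h0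
    · exact hz1.1.le
  obtain ⟨z, hz, hzq⟩ := this hu
  exact ⟨z, hz.2, hzq⟩

theorem derivContOn (hq : IsUProfile f γ q) : ContinuousOn (deriv q) (Iic 0) := by
  have h1 : ContinuousOn (derivWithin q (Iic 0)) (Iic 0) :=
    hq.1.continuousOn_derivWithin (uniqueDiffOn_Iic 0) (by norm_num)
  apply h1.congr
  intro z hz
  exact ((diffAt hq hz).derivWithin (uniqueDiffOn_Iic 0 z hz)).symm

theorem deriv2 (hq : IsUProfile f γ q) {z : ℝ} (hz : z < 0) :
    HasDerivAt (deriv q) (deriv (deriv q) z) z := by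
  have h1 : ContDiffOn ℝ 2 q (Iio 0) := hq.1.mono Iio_subset_Iic_self
  have h2 : ContDiffOn ℝ 1 (deriv q) (Iio 0) :=
    h1.deriv_of_isOpen isOpen_Iio (by norm_num)
  have h3 : DifferentiableOn ℝ (deriv q) (Iio 0) := h2.differentiableOn (by norm_num)
  exact ((h3 z hz).differentiableAt (isOpen_Iio.mem_nhds hz)).hasDerivAt

theorem deriv_small (hq : IsUProfile f γ q) {ε : ℝ} (hε : 0 < ε) :
    ∃ z, z ≤ 0 ∧ -ε < deriv q z := by
  by_contra h
  push_neg at h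
  set z : ℝ := -(2/ε) with hzdef
  have hz0 : z < 0 := by
    have : (0:ℝ) < 2/ε := by positivity
    rw [hzdef]; linarith
  obtain ⟨c, hc, hslope⟩ := exists_deriv_eq_slope q hz0
    ((contOn hq).mono (fun w hw => hw.2))
    (fun x hx => (diffAt hq (le_of_lt hx.2)).differentiableWithinAt)
  have hcle : deriv q c ≤ -ε := h c (le_of_lt hc.2)
  rw [hslope] at hcle
  have h1 : 0 ≤ q z := nonneg hq hz0.le
  have h2 : q 0 = 0 := hq.2.2.1
  have h3 : q z < 1 := lt_one hq hz0.le
  have hden : (0:ℝ) - z = 2/ε := by rw [hzdef]; ring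
  rw [h2, hden] at hcle
  have hpos : (0:ℝ) < 2/ε := by positivity
  have h5 := (div_le_iff₀ hpos).mp hcle
  have h6 : -ε * (2/ε) = -2 := by field_simp
  linarith

end UP

namespace UP

open Classical in
def Z (q : ℝ → ℝ) (u : ℝ) : ℝ :=
  if h : ∃ z, z ≤ 0 ∧ q z = u then Classical.choose h else 0

variable {f : ℝ → ℝ} {γ : ℝ} {q : ℝ → ℝ}

theorem Zspec (hq : IsUProfile f γ q) {u : ℝ} (h0 : 0 ≤ u) (h1 : u < 1) :
    Z q u ≤ 0 ∧ q (Z q u) = u := by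
  have h := surj hq h0 h1
  rw [Z]
  rw [dif_pos h]
  exact Classical.choose_spec h

theorem Zinv (hq : IsUProfile f γ q) {z : ℝ} (hz : z ≤ 0) : Z q (q z) = z := by
  have h1 := Zspec hq (nonneg hq hz) (lt_one hq hz)
  exact (anti hq).injOn h1.1 hz h1.2

theorem Zzero (hq : IsUProfile f γ q) : Z q 0 = 0 := by
  have := Zinv hq (le_refl (0:ℝ))
  rwa [hq.2.2.1] at this

theorem Zneg (hq : IsUProfile f γ q) {u : ℝ} (h0 : 0 < u) (h1 : u < 1) : Z q u < 0 := by
  have h := Zspec hq h0.le h1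
  rcases eq_or_lt_of_le h.1 with h' | h'
  · exfalso; rw [h', hq.2.2.1] at h; linarith [h.2]
  · exact h'

theorem Zlt (hq : IsUProfile f γ q) {u w : ℝ} (h0 : 0 ≤ u) (h1 : u < 1) (hw : w ≤ 0)
    (h : u < q w) : w < Z q u := by
  have hs := Zspec hq h0 h1
  by_contra hc
  push_neg at hc
  rcases eq_or_lt_of_le hc with h' | h'
  · rw [← h', hs.2] at h; linarith
  · have := anti hq hs.1 hw h'
    rw [hs.2] at this; linarith

theorem Zgt (hq : IsUProfile f γ q) {u w : ℝ} (h0 : 0 ≤ u) (h1 : u < 1) (hw : w ≤ 0)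
    (h : q w < u) : Z q u < w := by
  have hs := Zspec hq h0 h1
  by_contra hc
  push_neg at hc
  rcases eq_or_lt_of_le hc with h' | h'
  · rw [h', hs.2] at h; linarith
  · have := anti hq hw hs.1 h'
    rw [hs.2] at this; linarith

theorem ZcontAt (hq : IsUProfile f γ q) {u : ℝ} (h0 : 0 < u) (h1 : u < 1) :
    ContinuousAt (Z q) u := by
  rw [Metric.continuousAt_iff]
  intro ε hε
  set z0 : ℝ := Z q u with hz0def
  have hs := Zspec hq h0.le h1
  have hz0neg : z0 < 0 := Zneg hq h0 h1
  set ε₀ : ℝ := min ε (-z0) with hε₀def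
  have hε₀pos : 0 < ε₀ := lt_min hε (by linarith)
  have hup : z0 + ε₀ ≤ 0 := by
    have : ε₀ ≤ -z0 := min_le_right _ _
    linarith
  have hlo : q (z0 + ε₀) < u := by
    have := anti hq (show z0 ∈ Iic (0:ℝ) from hs.1) (show z0 + ε₀ ∈ Iic (0:ℝ) from hup)
      (by linarith)
    rw [hs.2] at this; exact this
  have hhi : u < q (z0 - ε₀) := by
    have := anti hq (show z0 - ε₀ ∈ Iic (0:ℝ) by simp; linarith) (show z0 ∈ Iic (0:ℝ) from hs.1)
      (by linarith)
    rw [hs.2] at this; exact this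
  refine ⟨min (q (z0 - ε₀) - u) (u - q (z0 + ε₀)), lt_min (by linarith) (by linarith), ?_⟩
  intro u' hu'
  rw [Real.dist_eq] at hu'
  have hu'lo : q (z0 + ε₀) < u' := by
    have := abs_lt.mp hu'
    have h2 := min_le_right (q (z0 - ε₀) - u) (u - q (z0 + ε₀))
    linarith [this.1]
  have hu'hi : u' < q (z0 - ε₀) := by
    have := abs_lt.mp hu'
    have h2 := min_le_left (q (z0 - ε₀) - u) (u - q (z0 + ε₀))
    linarith [this.2]
  have hu'0 : 0 ≤ u' := by
    have := nonneg hq hup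
    linarith
  have hu'1 : u' < 1 := lt_trans hu'hi (lt_one hq (by simp; linarith))
  have hA : Z q u' < z0 + ε₀ := Zgt hq hu'0 hu'1 hup hu'lo
  have hB : z0 - ε₀ < Z q u' := Zlt hq hu'0 hu'1 (by simp; linarith) hu'hi
  rw [Real.dist_eq, abs_lt]
  constructor <;> [skip; skip] <;>
  · have := min_le_left ε (-z0)
    simp only [← hε₀def] at *
    linarith

theorem Zcont0 (hq : IsUProfile f γ q) : ContinuousWithinAt (Z q) (Ico 0 1) 0 := by
  rw [Metric.continuousWithinAt_iff]
  intro ε hε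
  set ε₀ : ℝ := min ε 1 with hε₀def
  have hε₀pos : 0 < ε₀ := lt_min hε one_pos
  have hqpos : 0 < q (-ε₀) := pos hq (by linarith)
  refine ⟨q (-ε₀), hqpos, ?_⟩
  intro u' hu' hd
  rw [Real.dist_eq] at hd
  have hu'lt : u' < q (-ε₀) := by
    have := abs_lt.mp hd
    linarith [this.2, hu'.1]
  have hB : -ε₀ < Z q u' := Zlt hq hu'.1 hu'.2 (by linarith) hu'lt
  have hA : Z q u' ≤ 0 := (Zspec hq hu'.1 hu'.2).1
  rw [Zzero hq, Real.dist_eq, abs_lt]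
  have := min_le_left ε 1
  constructor <;> linarith

end UP

namespace UP

def pf (q : ℝ → ℝ) (u : ℝ) : ℝ := -deriv q (Z q u)

variable {f : ℝ → ℝ} {γ : ℝ} {q : ℝ → ℝ}

theorem pPos (hq : IsUProfile f γ q) {u : ℝ} (h0 : 0 ≤ u) (h1 : u < 1) : 0 < pf q u := by
  have hs := Zspec hq h0 h1
  have := hq.2.2.2.2 _ hs.1
  rw [pf]; linarith

theorem pcont0 (hq : IsUProfile f γ q) : ContinuousWithinAt (pf q) (Ico 0 1) 0 := by
  have h1 : ContinuousWithinAt (deriv q) (Iic 0) (Z q 0) := by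
    rw [Zzero hq]
    exact derivContOn hq 0 (le_refl (0:ℝ))
  have h2 : MapsTo (Z q) (Ico 0 1) (Iic 0) := fun u hu => (Zspec hq hu.1 hu.2).1
  exact ((h1.comp (Zcont0 hq) h2).neg : )

theorem hasDerivZ (hq : IsUProfile f γ q) {u : ℝ} (h0 : 0 < u) (h1 : u < 1) :
    HasDerivAt (Z q) (deriv q (Z q u))⁻¹ u := by
  have hs := Zspec hq h0.le h1
  apply HasDerivAt.of_local_left_inverse (ZcontAt hq h0 h1)
    ((diffAt hq hs.1).hasDerivAt) (ne_of_lt (hq.2.2.2.2 _ hs.1))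
  have hmem : Ioo (0:ℝ) 1 ∈ nhds u := isOpen_Ioo.mem_nhds ⟨h0, h1⟩
  filter_upwards [hmem] with y hy
  exact (Zspec hq hy.1.le hy.2).2

theorem hasDerivP (hq : IsUProfile f γ q) {u : ℝ} (h0 : 0 < u) (h1 : u < 1) :
    HasDerivAt (pf q) (γ + f u * (deriv q (Z q u))⁻¹) u := by
  have hzu : Z q u < 0 := Zneg hq h0 h1
  have hs := Zspec hq h0.le h1
  have h2 : HasDerivAt (deriv q) (deriv (deriv q) (Z q u)) (Z q u) := deriv2 hq hzu
  have h3 := (h2.comp u (hasDerivZ hq h0 h1)).neg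
  have hODE := hq.2.1 (Z q u) hzu
  rw [hs.2] at hODE
  have hne : deriv q (Z q u) ≠ 0 := ne_of_lt (hq.2.2.2.2 _ hs.1)
  have hval : -(deriv (deriv q) (Z q u) * (deriv q (Z q u))⁻¹)
      = γ + f u * (deriv q (Z q u))⁻¹ := by
    have hq2 : deriv (deriv q) (Z q u) = -(γ * deriv q (Z q u)) - f u := by linarith
    rw [hq2]
    field_simp
    ring
  rw [← hval]
  exact h3

theorem key {f : ℝ → ℝ} (hfpos : ∀ u : ℝ, 0 < u → u < 1 → 0 < f u)
    {γ1 γ2 : ℝ} {q1 q2 : ℝ → ℝ}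
    (hq1 : IsUProfile f γ1 q1) (hq2 : IsUProfile f γ2 q2) (hγ : γ1 ≤ γ2) :
    deriv q1 0 ≤ deriv q2 0 := by
  by_contra hcon
  push_neg at hcon
  set w : ℝ → ℝ := fun u => pf q1 u - pf q2 u with hwdef
  have hw0 : w 0 < 0 := by
    simp only [hwdef, pf, Zzero hq1, Zzero hq2]
    linarith
  have hwHas : ∀ u ∈ Ioo (0:ℝ) 1, HasDerivAt w
      ((γ1 + f u * (deriv q1 (Z q1 u))⁻¹) - (γ2 + f u * (deriv q2 (Z q2 u))⁻¹)) u :=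
    fun u hu => (hasDerivP hq1 hu.1 hu.2).sub (hasDerivP hq2 hu.1 hu.2)
  have hwneg : ∀ u ∈ Ioo (0:ℝ) 1, w u < 0 → deriv w u < 0 := by
    intro u hu hwu
    rw [(hwHas u hu).deriv]
    have hp1 : 0 < pf q1 u := pPos hq1 hu.1.le hu.2
    have hp2 : 0 < pf q2 u := pPos hq2 hu.1.le hu.2
    have e1 : deriv q1 (Z q1 u) = -(pf q1 u) := by rw [pf]; ring
    have e2 : deriv q2 (Z q2 u) = -(pf q2 u) := by rw [pf]; ring
    rw [e1, e2, inv_neg, inv_neg]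
    have hlt : pf q1 u < pf q2 u := by
      have : pf q1 u - pf q2 u < 0 := hwu
      linarith
    have hinv : (pf q2 u)⁻¹ < (pf q1 u)⁻¹ := inv_strictAnti₀ hp1 hlt
    have hF : 0 < f u := hfpos u hu.1 hu.2
    have := mul_lt_mul_of_pos_left hinv hF
    linarith
  have hwcont : ContinuousOn w (Ico 0 1) := by
    intro u hu
    rcases eq_or_lt_of_le hu.1 with h | h
    · rw [← h]
      exact (pcont0 hq1).sub (pcont0 hq2)
    · exact ((hwHas u ⟨h, hu.2⟩).continuousAt).continuousWithinAt
  have hδ : ∃ δ > 0, ∀ u, 0 ≤ u → u < δ → u < 1 → w u < 0 := by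
    have hc := hwcont 0 ⟨le_rfl, one_pos⟩
    rw [Metric.continuousWithinAt_iff] at hc
    obtain ⟨δ, hδpos, hδ⟩ := hc (-(w 0)) (by linarith)
    refine ⟨δ, hδpos, ?_⟩
    intro u hu0 huδ hu1
    have hd : dist u 0 < δ := by
      rw [Real.dist_eq, sub_zero, abs_of_nonneg hu0]; exact huδ
    have := hδ ⟨hu0, hu1⟩ hd
    rw [Real.dist_eq] at this
    have := abs_lt.mp this
    linarith [this.1, this.2]
  obtain ⟨δ, hδpos, hδsmall⟩ := hδ
  have hclaim : ∀ u, 0 ≤ u → u < 1 → w u < 0 := by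
    by_contra hcl
    push_neg at hcl
    obtain ⟨u0, hu00, hu01, hu0w⟩ := hcl
    set S : Set ℝ := {u | (0 ≤ u ∧ u < 1) ∧ 0 ≤ w u} with hS
    have hSne : S.Nonempty := ⟨u0, ⟨hu00, hu01⟩, hu0w⟩
    have hSbdd : BddBelow S := ⟨0, fun s hs => hs.1.1⟩
    set u1 := sInf S with hu1def
    have hu1lb : ∀ s ∈ S, δ ≤ s := by
      intro s hs
      by_contra hno
      push_neg at hno
      exact absurd hs.2 (not_le.mpr (hδsmall s hs.1.1 hno hs.1.2))
    have hu1δ : δ ≤ u1 := le_csInf hSne hu1lb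
    have hu1pos : 0 < u1 := lt_of_lt_of_le hδpos hu1δ
    have hu1le : u1 ≤ u0 := csInf_le hSbdd ⟨⟨hu00, hu01⟩, hu0w⟩
    have hu1lt1 : u1 < 1 := lt_of_le_of_lt hu1le hu01
    have hu1w : 0 ≤ w u1 := by
      by_contra hneg
      push_neg at hneg
      have hcAt : ContinuousAt w u1 := (hwHas u1 ⟨hu1pos, hu1lt1⟩).continuousAt
      have hev : ∀ᶠ x in nhds u1, w x < 0 := by
        have : Tendsto w (nhds u1) (nhds (w u1)) := hcAt
        exact this.eventually_lt_const hneg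
      rw [Metric.eventually_nhds_iff] at hev
      obtain ⟨ε, hεpos, hε⟩ := hev
      obtain ⟨s, hsS, hslt⟩ := Real.lt_sInf_add_pos hSne hεpos
      have hsge : u1 ≤ s := csInf_le hSbdd hsS
      have : w s < 0 := hε (by rw [Real.dist_eq, abs_of_nonneg (by linarith)]; linarith)
      exact absurd hsS.2 (not_le.mpr this)
    have hsub : Icc (0:ℝ) u1 ⊆ Ico 0 1 := fun x hx => ⟨hx.1, lt_of_le_of_lt hx.2 hu1lt1⟩
    obtain ⟨c, hc, hslope⟩ := exists_deriv_eq_slope w hu1pos (hwcont.mono hsub)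
      (fun x hx => ((hwHas x ⟨hx.1, lt_trans hx.2 hu1lt1⟩).differentiableAt).differentiableWithinAt)
    have hwc : w c < 0 := by
      by_contra hge
      push_neg at hge
      have hcS : c ∈ S := ⟨⟨hc.1.le, lt_trans hc.2 hu1lt1⟩, hge⟩
      exact absurd (csInf_le hSbdd hcS) (not_le.mpr hc.2)
    have hd := hwneg c ⟨hc.1, lt_trans hc.2 hu1lt1⟩ hwc
    rw [hslope] at hd
    have : 0 < (w u1 - w 0) / (u1 - 0) := div_pos (by linarith) (by linarith)
    linarith
  have hanti : StrictAntiOn w (Ico 0 1) := by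
    apply strictAntiOn_of_deriv_neg (convex_Ico 0 1) hwcont
    intro u hu
    rw [interior_Ico] at hu
    exact hwneg u hu (hclaim u hu.1.le hu.2)
  have hboundp2 : ∀ u, 0 ≤ u → u < 1 → -(w 0) ≤ pf q2 u := by
    intro u h0 h1'
    have hwle : w u ≤ w 0 := by
      rcases eq_or_lt_of_le h0 with h | h
      · rw [← h]
      · exact (hanti ⟨le_rfl, one_pos⟩ ⟨h0, h1'⟩ h).le
    have hp1 : 0 < pf q1 u := pPos hq1 h0 h1'
    have : pf q1 u - pf q2 u ≤ pf q1 0 - pf q2 0 := hwle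
    have h2 : pf q1 0 - pf q2 0 = w 0 := rfl
    linarith [show pf q1 u - pf q2 u ≤ w 0 from hwle]
  obtain ⟨z, hz0, hzd⟩ := deriv_small hq2 (show (0:ℝ) < -(w 0) by linarith)
  have hu'0 : 0 ≤ q2 z := nonneg hq2 hz0
  have hu'1 : q2 z < 1 := lt_one hq2 hz0
  have hpz : pf q2 (q2 z) = -deriv q2 z := by rw [pf, Zinv hq2 hz0]
  have hb := hboundp2 (q2 z) hu'0 hu'1
  rw [hpz] at hb
  linarith

end UP


/-- There is a unique `β* > c₀` with `c*(β) - β + c₀ > 0` for `β < β*`, `= 0` at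
`β = β*`, `< 0` for `β > β*`; moreover `β* = P(-c₀) + c₀`. -/

theorem stmt3 (f : ℝ → ℝ) (μ : ℝ) (hf : KPP f) (hμ : 0 < μ)
    (cstar : ℝ → ℝ)
    (hcs : ∀ β > (0:ℝ), cstar β ∈ Set.Ioo (0:ℝ) (c0 f + β) ∧
      (∃ q : ℝ → ℝ, IsSemiWave f μ β (cstar β) q) ∧
      ∀ c' ∈ Set.Ioo (0:ℝ) (c0 f + β),
        (∃ q : ℝ → ℝ, IsSemiWave f μ β c' q) → c' = cstar β)
    (P : ℝ → ℝ)
    (hP : ∀ γ < c0 f, ∃ U : ℝ → ℝ, IsUProfile f γ U ∧ P γ = -μ * deriv U 0) :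
    ∃! βs : ℝ, c0 f < βs ∧
      (∀ β > (0:ℝ),
        (β < βs → 0 < cstar β - β + c0 f) ∧
        (β = βs → cstar β - β + c0 f = 0) ∧
        (βs < β → cstar β - β + c0 f < 0)) ∧
      βs = P (-(c0 f)) + c0 f := by
  have hc0 : 0 < c0 f := by
    have h1 : 0 < deriv f 0 := hf.2.2.2.2.1
    have h2 := Real.sqrt_pos.mpr h1
    rw [c0]; linarith
  have hfpos : ∀ u : ℝ, 0 < u → u < 1 → 0 < f u := by
    intro u h0 h1
    have h2 := hf.2.2.2.1 u h0 (ne_of_lt h1)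
    by_contra h3
    push_neg at h3
    nlinarith
  obtain ⟨U, hU, hPU⟩ := hP (-(c0 f)) (by linarith)
  have hU' : deriv U 0 < 0 := hU.2.2.2.2 0 le_rfl
  have hPpos : 0 < P (-(c0 f)) := by rw [hPU]; nlinarith
  set βs := P (-(c0 f)) + c0 f with hβsdef
  have hβs : c0 f < βs := by rw [hβsdef]; linarith
  have hβc0 : βs - c0 f = P (-(c0 f)) := by rw [hβsdef]; ring
  have hUsw : IsSemiWave f μ βs (βs - c0 f) U := by
    obtain ⟨h1, h2, h3, h4, h5⟩ := hU
    refine ⟨h1, ?_, h3, h4, ?_, h5⟩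
    · intro z hz
      have he : βs - c0 f - βs = -(c0 f) := by ring
      rw [he]
      exact h2 z hz
    · rw [hβc0]
      exact hPU.symm
  have hcβs : cstar βs = βs - c0 f := by
    have h := (hcs βs (by linarith)).2.2 (βs - c0 f)
      (Set.mem_Ioo.mpr ⟨by rw [hβc0]; linarith, by linarith⟩) ⟨U, hUsw⟩
    exact h.symm
  have mono : ∀ β1 β2, 0 < β1 → β1 < β2 → cstar β2 - β2 < cstar β1 - β1 := by
    intro β1 β2 hβ1 hlt
    by_contra hcon
    push_neg at hcon
    obtain ⟨q1, hq1⟩ := (hcs β1 hβ1).2.1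
    obtain ⟨q2, hq2⟩ := (hcs β2 (by linarith)).2.1
    have hp1 : IsUProfile f (cstar β1 - β1) q1 :=
      ⟨hq1.1, hq1.2.1, hq1.2.2.1, hq1.2.2.2.1, hq1.2.2.2.2.2⟩
    have hp2 : IsUProfile f (cstar β2 - β2) q2 :=
      ⟨hq2.1, hq2.2.1, hq2.2.2.1, hq2.2.2.2.1, hq2.2.2.2.2.2⟩
    have hk := UP.key hfpos hp1 hp2 hcon
    have e1 := hq1.2.2.2.2.1
    have e2 := hq2.2.2.2.2.1
    have hm := mul_le_mul_of_nonneg_left hk hμ.le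
    have : cstar β2 ≤ cstar β1 := by
      simp only [neg_mul] at e1 e2
      linarith
    linarith
  refine ⟨βs, ⟨hβs, ?_, hβsdef⟩, ?_⟩
  · intro β hβ
    refine ⟨fun hlt => ?_, fun heq => ?_, fun hgt => ?_⟩
    · have := mono β βs hβ hlt
      rw [hcβs] at this
      linarith
    · rw [heq, hcβs]; ring
    · have := mono βs β (by linarith) hgt
      rw [hcβs] at this
      linarith
  · rintro y ⟨-, -, hy⟩
    rw [hy, hβsdef]
end
end
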